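/- arXiv:1401.6432 — 5 statements merged into one kernel-verified Lean document; each statement's English description precedes it below -/
import Mathlib

section
/- Let R : X → ℝ be a rate function over Q (i.e., Q{R(·) ≥ t} ≤ 2^{-n t} for all t ∈ ℝ), and suppose there is B ≥ 0 such that Q{x : n·R(x) ≥ B} = 0. Then E_Q[2^{n·R(X)}] ≤ 1 + ln(2)·B. -/
/-!
Write `Y = n R`. Each `2 ^ Y` with `Y ≤ B` is at most `1 + ∫₀^B 𝟙[t ≤ Y] log 2 · 2 ^ t dt`
(with equality when `0 ≤ Y`). Averaging over `Q` and swapping the finite sum with the integral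
replaces the indicators by the tail `Q{Y ≥ t} ≤ 2 ^ (-t)`, so the integrand is at most `log 2`
and the integral at most `B log 2`.
-/

open Finset Set

section LayerCake

variable {b : ℝ}

theorem integral_log_mul_rpow (hb : 0 < b) (a c : ℝ) :
    ∫ t in a..c, Real.log b * b ^ t = b ^ c - b ^ a :=
  intervalIntegral.integral_eq_sub_of_hasDerivAt
    (fun t _ => by simpa [mul_comm] using (Real.hasStrictDerivAt_const_rpow hb t).hasDerivAt)
    ((continuous_const.mul (Real.continuous_const_rpow hb.ne')).intervalIntegrable a c)

theorem rpow_le_one_add_integral_indicator (hb : 1 ≤ b) {c B : ℝ} (hB : 0 ≤ B) (hcB : c ≤ B) :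
    b ^ c ≤ 1 + ∫ t in (0 : ℝ)..B, {t | t ≤ c}.indicator (fun t => Real.log b * b ^ t) t := by
  rcases le_or_gt c 0 with hc | hc
  · have hint : 0 ≤ ∫ t in (0 : ℝ)..B, {t | t ≤ c}.indicator (fun t => Real.log b * b ^ t) t :=
      intervalIntegral.integral_nonneg hB fun t _ => indicator_nonneg
        (fun t _ => mul_nonneg (Real.log_nonneg hb) (Real.rpow_nonneg (by linarith) t)) t
    linarith [Real.rpow_le_one_of_one_le_of_nonpos hb hc]
  · rw [intervalIntegral.integral_indicator ⟨hc.le, hcB⟩,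
      integral_log_mul_rpow (by linarith), Real.rpow_zero]
    linarith

theorem sum_mul_indicator_eq_sum_filter_mul {ι : Type*} (s : Finset ι) (w Y : ι → ℝ)
    (g : ℝ → ℝ) (t : ℝ) :
    ∑ i ∈ s, w i * {t | t ≤ Y i}.indicator g t = (∑ i ∈ s with t ≤ Y i, w i) * g t := by
  rw [sum_filter, sum_mul]
  refine sum_congr rfl fun i _ => ?_
  by_cases h : t ≤ Y i <;> simp [h]

theorem sum_mul_rpow_le_one_add_log_mul {ι : Type*} {s : Finset ι} {w Y : ι → ℝ} {B : ℝ}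
    (hb : 1 ≤ b) (hB : 0 ≤ B) (hw0 : ∀ i ∈ s, 0 ≤ w i) (hw1 : ∑ i ∈ s, w i ≤ 1)
    (hYB : ∀ i ∈ s, w i ≠ 0 → Y i ≤ B)
    (htail : ∀ t ∈ Icc 0 B, ∑ i ∈ s with t ≤ Y i, w i ≤ b ^ (-t)) :
    ∑ i ∈ s, w i * b ^ Y i ≤ 1 + Real.log b * B := by
  set g : ℝ → ℝ := fun t => Real.log b * b ^ t
  set f : ι → ℝ → ℝ := fun i t => w i * {t | t ≤ Y i}.indicator g t
  have hg : Continuous g := continuous_const.mul (Real.continuous_const_rpow (by linarith))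
  have hf : ∀ i ∈ s, IntervalIntegrable (f i) MeasureTheory.volume 0 B := fun i _ =>
    (intervalIntegrable_iff.mpr (hg.integrableOn_uIoc.indicator measurableSet_Iic)).const_mul (w i)
  have hpoint : ∀ i ∈ s, w i * b ^ Y i ≤ w i + ∫ t in (0 : ℝ)..B, f i t := by
    intro i hi
    rw [intervalIntegral.integral_const_mul, ← mul_one_add]
    rcases eq_or_ne (w i) 0 with h0 | h0
    · simp [h0]
    · exact mul_le_mul_of_nonneg_left
        (rpow_le_one_add_integral_indicator hb hB (hYB i hi h0)) (hw0 i hi)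
  have hsum : ∀ t ∈ Icc 0 B, ∑ i ∈ s, f i t ≤ Real.log b := by
    intro t ht
    rw [sum_mul_indicator_eq_sum_filter_mul]
    calc (∑ i ∈ s with t ≤ Y i, w i) * g t ≤ b ^ (-t) * g t :=
          mul_le_mul_of_nonneg_right (htail t ht)
            (mul_nonneg (Real.log_nonneg hb) (Real.rpow_nonneg (by linarith) t))
      _ = Real.log b := by
          rw [Real.rpow_neg (by linarith)]
          simp only [g]
          field_simp [(Real.rpow_pos_of_pos (by linarith : 0 < b) t).ne']
  calc ∑ i ∈ s, w i * b ^ Y i ≤ ∑ i ∈ s, (w i + ∫ t in (0 : ℝ)..B, f i t) := sum_le_sum hpoint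
    _ = ∑ i ∈ s, w i + ∫ t in (0 : ℝ)..B, ∑ i ∈ s, f i t := by
        rw [sum_add_distrib, intervalIntegral.integral_finsetSum hf]
    _ ≤ 1 + ∫ _ in (0 : ℝ)..B, Real.log b := by
        gcongr
        refine intervalIntegral.integral_mono_on hB ?_ intervalIntegrable_const hsum
        rw [← sum_fn]
        exact IntervalIntegrable.sum s hf
    _ = 1 + Real.log b * B := by simp [mul_comm]

end LayerCake

theorem rate_function_exp_bound_general
    {X : Type*} [Fintype X]
    (Q : X → ℝ) (hQ0 : ∀ x, 0 ≤ Q x) (hQ1 : ∑ x, Q x = 1)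
    (n : ℝ) (hn : 0 < n) (R : X → ℝ)
    (hR : ∀ t : ℝ, ∑ x ∈ univ.filter (fun x => t ≤ R x), Q x ≤ (2 : ℝ) ^ (-n * t))
    (B : ℝ) (hB : 0 ≤ B)
    (hbound : ∑ x ∈ univ.filter (fun x => B ≤ n * R x), Q x = 0) :
    ∑ x, Q x * (2 : ℝ) ^ (n * R x) ≤ 1 + Real.log 2 * B := by
  have hQB : ∀ x, Q x ≠ 0 → n * R x ≤ B := by
    intro x hx
    by_contra! h
    exact hx ((sum_eq_zero_iff_of_nonneg fun y _ => hQ0 y).mp hbound x (by simp [h.le]))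
  have htail : ∀ t ∈ Icc 0 B, ∑ x with t ≤ n * R x, Q x ≤ (2 : ℝ) ^ (-t) := by
    intro t _
    have hscale : ∀ x, t ≤ n * R x ↔ t / n ≤ R x := fun x => by rw [div_le_iff₀' hn]
    simp_rw [hscale]
    simpa [mul_div_cancel₀ t hn.ne'] using hR (t / n)
  exact sum_mul_rpow_le_one_add_log_mul one_le_two hB (fun x _ => hQ0 x) hQ1.le
    (fun x _ => hQB x) htail

/-- Layer-cake bound: if `R` is a rate function over `Q` which is bounded,
`Q{x : n·R(x) ≥ B} = 0`, then `E_Q[2^{n R(X)}] ≤ 1 + ln(2)·B`. -/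
theorem rate_function_exp_bound
    {X : Type*} [Fintype X] [Nonempty X]
    (Q : X → ℝ) (hQ0 : ∀ x, 0 ≤ Q x) (hQ1 : ∑ x, Q x = 1)
    (n : ℝ) (hn : 0 < n) (R : X → ℝ)
    (hR : ∀ t : ℝ, ∑ x ∈ univ.filter (fun x => t ≤ R x), Q x ≤ (2 : ℝ) ^ (-n * t))
    (B : ℝ) (hB : 0 ≤ B)
    (hbound : ∑ x ∈ univ.filter (fun x => B ≤ n * R x), Q x = 0) :
    ∑ x, Q x * (2 : ℝ) ^ (n * R x) ≤ 1 + Real.log 2 * B :=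
  rate_function_exp_bound_general Q hQ0 hQ1 n hn R hR B hB hbound
end

section
/- Let Q be a probability distribution on a finite set X, and set χ = -log₂(min{Q(x) : Q(x) ≠ 0}). Then any rate function R over Q satisfies n·R(x) ≤ χ for every x with Q(x) > 0. Consequently, E_Q[2^{n·Ω_R(X)}] ≤ 1 + ln(2)·χ for every function R : X → ℝ, where Ω_R(x) = -(1/n)·log₂(Q{x' : R(x') ≥ R(x)}). -/
/-!
On the support of `Q` every mass is at least `2^{-χ}`, and a rate function `R` has
`Q x ≤ Q{R ≥ R x} ≤ 2^{-n R x}`, so `n R x ≤ χ` there. For `Ω = Ω_R` one has exactly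
`2^{n Ω x} = 1 / Q{R ≥ R x}`. Summing `Q x / Q{R ≥ R x}` one level set of `R` at a time, from the
bottom, a level with tail mass `T` above which mass `T'` remains contributes
`(T - T')/T ≤ log T - log T'`, and the top level contributes `1`. The sum telescopes to at most
`1 + log 1 - log (min Q) = 1 + ln 2 · χ`.
-/

open Finset

lemma sub_div_le_log_sub_log {b c : ℝ} (hb : 0 < b) (hc : 0 < c) :
    (c - b) / c ≤ Real.log c - Real.log b := by
  have h := Real.one_sub_inv_le_log_of_pos (div_pos hc hb)
  rwa [Real.log_div hc.ne' hb.ne', inv_div, one_sub_div hc.ne'] at h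

lemma sum_div_sum_ge_le_one_add_log {ι α : Type*} [LinearOrder α] (Q : ι → ℝ) (R : ι → α)
    {m : ℝ} (hm : 0 < m) (s : Finset ι) (hs : s.Nonempty) (hQ : ∀ x ∈ s, m ≤ Q x) :
    ∑ x ∈ s, Q x / ∑ y ∈ s with R x ≤ R y, Q y
      ≤ 1 + Real.log (∑ x ∈ s, Q x) - Real.log m := by
  induction s using Finset.strongInduction with
  | _ s ih =>
  set v := s.inf' hs R
  set upper := s.filter (v < R ·)
  have hQs : m ≤ ∑ x ∈ s, Q x :=
    (hQ _ hs.choose_spec).trans <| single_le_sum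
      (fun x hx => hm.le.trans (hQ x hx)) hs.choose_spec
  have hlower : ∀ x ∈ s.filter (¬ v < R ·), s.filter (R x ≤ R ·) = s := fun x hx =>
    filter_true_of_mem fun y hy => (not_lt.mp (mem_filter.mp hx).2).trans (inf'_le R hy)
  have hupper : ∀ x ∈ upper, s.filter (R x ≤ R ·) = upper.filter (R x ≤ R ·) := fun x hx => by
    rw [filter_filter]
    exact filter_congr fun y _ => ⟨fun h => ⟨(mem_filter.mp hx).2.trans_le h, h⟩, And.right⟩
  have hsplit : ∑ x ∈ s, Q x / ∑ y ∈ s with R x ≤ R y, Q y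
      = (∑ x ∈ s, Q x - ∑ x ∈ upper, Q x) / ∑ x ∈ s, Q x
        + ∑ x ∈ upper, Q x / ∑ y ∈ upper with R x ≤ R y, Q y := by
    rw [← sum_filter_add_sum_filter_not s (v < R ·),
      ← sum_filter_add_sum_filter_not s (v < R ·) Q, add_sub_cancel_left, sum_div, add_comm]
    congr 1
    · exact sum_congr rfl fun x hx => by
        rw [hlower x hx, ← sum_filter_add_sum_filter_not s (v < R ·)]
    · exact sum_congr rfl fun x hx => by rw [hupper x hx]
  rcases upper.eq_empty_or_nonempty with hempty | hne
  · rw [hsplit, hempty, sum_empty, sum_empty, sub_zero,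
      div_self (hm.trans_le hQs).ne', add_zero]
    linarith [Real.log_le_log hm hQs]
  · obtain ⟨x₀, hx₀, hv⟩ := exists_mem_eq_inf' hs R
    have hssub : upper ⊂ s := filter_ssubset.mpr ⟨x₀, hx₀, not_lt.mpr hv.ge⟩
    have hQu : 0 < ∑ x ∈ upper, Q x :=
      sum_pos (fun x hx => hm.trans_le (hQ x (mem_filter.mp hx).1)) hne
    have hIH := ih upper hssub hne fun x hx => hQ x (mem_filter.mp hx).1
    have hstep := sub_div_le_log_sub_log hQu (hm.trans_le hQs)
    rw [hsplit]
    linarith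

lemma sum_filter_ne_zero_div_sum_ge {ι α : Type*} [LinearOrder α] (Q : ι → ℝ) (R : ι → α)
    (t : Finset ι) :
    ∑ x ∈ t with Q x ≠ 0, Q x / ∑ y ∈ {y ∈ t | Q y ≠ 0} with R x ≤ R y, Q y
      = ∑ x ∈ t, Q x / ∑ y ∈ t with R x ≤ R y, Q y := by
  refine (sum_congr rfl fun x _ => ?_).trans
    (sum_filter_of_ne fun x _ h => (div_ne_zero_iff.mp h).1)
  rw [filter_comm, sum_filter_ne_zero]

lemma mul_le_neg_logb_of_sum_ge_le {X : Type*} [Fintype X] (Q : X → ℝ) (hQ0 : ∀ x, 0 ≤ Q x)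
    (n : ℝ) (R : X → ℝ)
    (hR : ∀ t : ℝ, ∑ x ∈ univ.filter (fun x => t ≤ R x), Q x ≤ (2 : ℝ) ^ (-n * t))
    {x : X} (hx : 0 < Q x) : n * R x ≤ -Real.logb 2 (Q x) := by
  have hQx : Q x ≤ (2 : ℝ) ^ (-n * R x) :=
    (single_le_sum (fun y _ => hQ0 y) (by simp)).trans (hR (R x))
  have := Real.logb_le_logb_of_le one_lt_two hx hQx
  rw [Real.logb_rpow two_pos (by norm_num)] at this
  linarith

theorem normal_prior_bound_general
    {X : Type*} [Fintype X]
    (Q : X → ℝ) (hQ0 : ∀ x, 0 ≤ Q x) (hQ1 : ∑ x, Q x = 1)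
    (hs : (univ.filter fun x => Q x ≠ 0).Nonempty)
    (n : ℝ) (hn : 0 < n)
    (χ : ℝ) (hχ : χ = -Real.logb 2 ((univ.filter fun x => Q x ≠ 0).inf' hs Q)) :
    (∀ R : X → ℝ,
      (∀ t : ℝ, ∑ x ∈ univ.filter (fun x => t ≤ R x), Q x ≤ (2 : ℝ) ^ (-n * t)) →
      ∀ x, 0 < Q x → n * R x ≤ χ) ∧
    (∀ R : X → ℝ, ∀ Ω : X → ℝ,
      (∀ x, Ω x = -(1 / n) * Real.logb 2
          (∑ x' ∈ univ.filter (fun x' => R x ≤ R x'), Q x')) →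
      ∑ x, Q x * (2 : ℝ) ^ (n * Ω x) ≤ 1 + Real.log 2 * χ) := by
  set m := (univ.filter fun x => Q x ≠ 0).inf' hs Q
  have hm : 0 < m := (lt_inf'_iff hs).mpr fun x hx => (hQ0 x).lt_of_ne' (mem_filter.mp hx).2
  have hmQ : ∀ x, 0 < Q x → m ≤ Q x := fun x hx =>
    inf'_le Q (mem_filter.mpr ⟨mem_univ x, hx.ne'⟩)
  refine ⟨fun R hR x hx => ?_, fun R Ω hΩ => ?_⟩
  · calc n * R x ≤ -Real.logb 2 (Q x) := mul_le_neg_logb_of_sum_ge_le Q hQ0 n R hR hx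
      _ ≤ χ := hχ ▸ neg_le_neg (Real.logb_le_logb_of_le one_lt_two hm (hmQ x hx))
  · have hterm : ∀ x, Q x * (2 : ℝ) ^ (n * Ω x)
        = Q x / ∑ x' ∈ univ.filter (fun x' => R x ≤ R x'), Q x' := fun x => by
      rcases (hQ0 x).eq_or_lt with hx | hx
      · simp [← hx]
      have hF : 0 < ∑ x' ∈ univ.filter (fun x' => R x ≤ R x'), Q x' :=
        hx.trans_le (single_le_sum (fun y _ => hQ0 y) (by simp))
      rw [hΩ, ← mul_assoc, mul_neg, mul_one_div_cancel hn.ne', neg_one_mul,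
        Real.rpow_neg two_pos.le, Real.rpow_logb two_pos (by norm_num) hF, div_eq_mul_inv]
    have hsupp : ∑ x ∈ univ with Q x ≠ 0, Q x = 1 := (sum_filter_ne_zero _).trans hQ1
    calc ∑ x, Q x * (2 : ℝ) ^ (n * Ω x)
        = ∑ x ∈ univ with Q x ≠ 0, Q x / ∑ y ∈ {y ∈ univ | Q y ≠ 0} with R x ≤ R y, Q y := by
          rw [sum_filter_ne_zero_div_sum_ge]; exact sum_congr rfl fun x _ => hterm x
      _ ≤ 1 + Real.log 1 - Real.log m := hsupp ▸ sum_div_sum_ge_le_one_add_log Q R hm _ hs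
          fun x hx => hmQ x ((hQ0 x).lt_of_ne' (mem_filter.mp hx).2)
      _ = 1 + Real.log 2 * χ := by
          rw [hχ, Real.log_one, ← Real.log_div_log, mul_neg, mul_div_cancel₀ _ (by positivity)]
          ring

/-- With `χ = -log₂(min of Q on its support)`: every rate function `R` over `Q`
satisfies `n·R(x) ≤ χ` on the support of `Q`, and consequently
`E_Q[2^{n·Ω_R(X)}] ≤ 1 + ln(2)·χ` for every function `R`. -/
theorem normal_prior_bound
    {X : Type*} [Fintype X] [Nonempty X]
    (Q : X → ℝ) (hQ0 : ∀ x, 0 ≤ Q x) (hQ1 : ∑ x, Q x = 1)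
    (hs : (univ.filter fun x => Q x ≠ 0).Nonempty)
    (n : ℝ) (hn : 0 < n)
    (χ : ℝ) (hχ : χ = -Real.logb 2 ((univ.filter fun x => Q x ≠ 0).inf' hs Q)) :
    (∀ R : X → ℝ,
      (∀ t : ℝ, ∑ x ∈ univ.filter (fun x => t ≤ R x), Q x ≤ (2 : ℝ) ^ (-n * t)) →
      ∀ x, 0 < Q x → n * R x ≤ χ) ∧
    (∀ R : X → ℝ, ∀ Ω : X → ℝ,
      (∀ x, Ω x = -(1 / n) * Real.logb 2
          (∑ x' ∈ univ.filter (fun x' => R x ≤ R x'), Q x')) →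
      ∑ x, Q x * (2 : ℝ) ^ (n * Ω x) ≤ 1 + Real.log 2 * χ) :=
  normal_prior_bound_general Q hQ0 hQ1 hs n hn χ hχ
end

section
/- Key step of the universality theorem: Let Q be a probability distribution on a finite set X, let {m_θ : θ ∈ Θ} be a finite family of functions X × Y → ℝ, and for x ∈ X, y ∈ Y define p_θ(x,y) = Q{x' : m_θ(x',y) ≥ m_θ(x,y)} and u(x,y) = min_{θ∈Θ} p_θ(x,y). Define K = max_y E_{X∼Q}[1/u(X,y)] (assuming u(x,y) > 0 whenever Q(x) > 0). Then for every θ ∈ Θ, every y ∈ Y, and every x: Q{x' : u(x',y) ≤ u(x,y)} ≤ p_θ(x,y)·K. -/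
open Finset

/-- Key step of the universality theorem (Markov inequality step):
the pairwise error of the GMET `u(x,y) = min_θ p_θ(x,y)` is bounded by
`p_θ(x,y) · K` where `K = max_y E_Q[1/u(X,y)]`. -/
theorem gmet_pairwise_error_bound
    {X Y Θ : Type*} [Fintype X] [Fintype Y] [Fintype Θ]
    [Nonempty X] [Nonempty Y] [Nonempty Θ]
    (Q : X → ℝ) (hQ0 : ∀ x, 0 ≤ Q x) (hQ1 : ∑ x, Q x = 1)
    (m : Θ → X → Y → ℝ)
    (p : Θ → X → Y → ℝ)
    (hp : ∀ θ x y, p θ x y = ∑ x' ∈ univ.filter (fun x' => m θ x y ≤ m θ x' y), Q x')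
    (u : X → Y → ℝ) (hu : ∀ x y, u x y = univ.inf' univ_nonempty (fun θ => p θ x y))
    (hupos : ∀ x y, 0 < Q x → 0 < u x y)
    (K : ℝ) (hK : K = univ.sup' univ_nonempty (fun y => ∑ x, Q x * (1 / u x y))) :
    ∀ θ : Θ, ∀ y : Y, ∀ x : X,
      ∑ x' ∈ univ.filter (fun x' => u x' y ≤ u x y), Q x' ≤ p θ x y * K := by
  intro θ y x
  have hp0 : ∀ θ' x' y', 0 ≤ p θ' x' y' := fun θ' x' y' => by
    rw [hp]; exact Finset.sum_nonneg fun x'' _ => hQ0 x''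
  have hu0 : ∀ x' y', 0 ≤ u x' y' := fun x' y' => by
    rw [hu]; exact Finset.le_inf' _ _ fun θ' _ => hp0 θ' x' y'
  have hSnn : ∀ y', 0 ≤ ∑ x', Q x' * (1 / u x' y') := fun y' =>
    Finset.sum_nonneg fun x' _ =>
      mul_nonneg (hQ0 x') (one_div_nonneg.mpr (hu0 x' y'))
  have hK0 : 0 ≤ K := by
    rw [hK]
    exact le_trans (hSnn (Classical.arbitrary Y))
      (Finset.le_sup' (fun y => ∑ x, Q x * (1 / u x y)) (mem_univ (Classical.arbitrary Y)))
  have hSK : ∑ x', Q x' * (1 / u x' y) ≤ K := by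
    rw [hK]; exact Finset.le_sup' (fun y => ∑ x, Q x * (1 / u x y)) (mem_univ y)
  have hup : u x y ≤ p θ x y := by
    rw [hu]; exact Finset.inf'_le _ (mem_univ θ)
  calc ∑ x' ∈ univ.filter (fun x' => u x' y ≤ u x y), Q x'
      ≤ ∑ x' ∈ univ.filter (fun x' => u x' y ≤ u x y),
          u x y * (Q x' * (1 / u x' y)) := by
        refine Finset.sum_le_sum fun x' hx' => ?_
        have hle : u x' y ≤ u x y := (Finset.mem_filter.mp hx').2
        rcases (hQ0 x').eq_or_lt with h | h
        · rw [← h]; simp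
        · have h1 : 0 < u x' y := hupos x' y h
          rw [show u x y * (Q x' * (1 / u x' y)) = u x y * Q x' / u x' y by ring,
            le_div_iff₀ h1]
          nlinarith
    _ ≤ ∑ x', u x y * (Q x' * (1 / u x' y)) := by
        refine Finset.sum_le_sum_of_subset_of_nonneg (Finset.filter_subset _ _)
          fun x'' _ _ => ?_
        exact mul_nonneg (hu0 x y)
          (mul_nonneg (hQ0 x'') (one_div_nonneg.mpr (hu0 x'' y)))
    _ = u x y * ∑ x', Q x' * (1 / u x' y) := by rw [Finset.mul_sum]
    _ ≤ u x y * K := mul_le_mul_of_nonneg_left hSK (hu0 x y)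
    _ ≤ p θ x y * K := mul_le_mul_of_nonneg_right hup hK0
end

section
/- Normal prior implies uniform metric bound: Let Q be a probability distribution on a finite set X and let χ = -log₂(min{Q(x) : Q(x) > 0}). For any function m : X → ℝ define p_m(x) = Q{x' : m(x') ≥ m(x)}. Then E_{X∼Q}[1/p_m(X)] ≤ 1 + ln(2)·χ, uniformly over all functions m. -/
/-!
Restrict to the support `S` of `Q`, where `Q ≥ c := min_S Q`. Induct on `S` by removing a point
`x₀` minimising `m`: its tail mass is the total mass `T`, and removing it only shrinks the other
tail masses, so with `T' = T - Q x₀` the sum grows by at most `Q x₀ / T ≤ log T - log T'`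
(from `log t ≤ t - 1`). Telescoping gives `1 + log T - log c = 1 - log c = 1 + ln 2 · χ`.
-/

open Finset

lemma div_add_log_le_log_add {a b : ℝ} (ha : 0 ≤ a) (hb : 0 < b) :
    a / (a + b) + Real.log b ≤ Real.log (a + b) := by
  have hab : 0 < a + b := by linarith
  have h := Real.log_le_sub_one_of_pos (div_pos hb hab)
  rw [Real.log_div hb.ne' hab.ne'] at h
  have hsplit : a / (a + b) = 1 - b / (a + b) := by field_simp; ring
  linarith

section TailMass

variable {X : Type*} (Q m : X → ℝ)

/-- `p_m(x)` for the weights `Q` restricted to `s`. -/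
noncomputable def tailMass (s : Finset X) (x : X) : ℝ :=
  ∑ x' ∈ s with m x ≤ m x', Q x'

variable {Q m}

lemma tailMass_mono {s t : Finset X} (hst : s ⊆ t) (hQ : ∀ y ∈ t, 0 ≤ Q y) (x : X) :
    tailMass Q m s x ≤ tailMass Q m t x :=
  sum_le_sum_of_subset_of_nonneg (filter_subset_filter _ hst)
    fun y hy _ => hQ y (mem_filter.mp hy).1

lemma tailMass_pos {s : Finset X} (hQ : ∀ y ∈ s, 0 < Q y) {x : X} (hx : x ∈ s) :
    0 < tailMass Q m s x :=
  sum_pos (fun y hy => hQ y (mem_filter.mp hy).1) ⟨x, mem_filter.mpr ⟨hx, le_rfl⟩⟩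

lemma tailMass_eq_sum_of_forall_le {s : Finset X} {x : X} (hx : ∀ y ∈ s, m x ≤ m y) :
    tailMass Q m s x = ∑ y ∈ s, Q y := by
  rw [tailMass, filter_true_of_mem hx]

lemma tailMass_filter_ne_zero (s : Finset X) (x : X) :
    tailMass Q m (s.filter (Q · ≠ 0)) x = tailMass Q m s x := by
  rw [tailMass, tailMass, filter_comm, sum_filter_ne_zero]

lemma sum_div_tailMass_filter_ne_zero (s : Finset X) :
    ∑ x ∈ s with Q x ≠ 0, Q x / tailMass Q m (s.filter (Q · ≠ 0)) x
      = ∑ x ∈ s, Q x / tailMass Q m s x := by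
  simp_rw [tailMass_filter_ne_zero]
  exact sum_filter_of_ne fun x _ h hx => h (by rw [hx, zero_div])

theorem sum_div_tailMass_le {c : ℝ} (hc : 0 < c) {s : Finset X} (hs : s.Nonempty)
    (hcs : ∀ x ∈ s, c ≤ Q x) :
    ∑ x ∈ s, Q x / tailMass Q m s x ≤ 1 + Real.log (∑ x ∈ s, Q x) - Real.log c := by
  induction hs using Nonempty.strong_induction with
  | h₀ a =>
    have hca := hcs a (mem_singleton_self a)
    rw [sum_singleton, sum_singleton,
      tailMass_eq_sum_of_forall_le (by simp), sum_singleton, div_self (by linarith)]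
    linarith [Real.log_le_log hc hca]
  | @h₁ s hs ih =>
    classical
    have hQ : ∀ y ∈ s, 0 < Q y := fun y hy => hc.trans_le (hcs y hy)
    obtain ⟨x₀, hx₀, hmin⟩ := s.exists_min_image m hs.nonempty
    set s' := s.erase x₀
    have hs' : s'.Nonempty := hs.erase_nonempty
    have hQ' : ∀ y ∈ s', 0 < Q y := fun y hy => hQ y (mem_of_mem_erase hy)
    have hterm : ∀ x ∈ s', Q x / tailMass Q m s x ≤ Q x / tailMass Q m s' x := fun x hx =>
      div_le_div_of_nonneg_left (hQ' x hx).le (tailMass_pos hQ' hx)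
        (tailMass_mono (erase_subset x₀ s) (fun y hy => (hQ y hy).le) x)
    have ih' := ih s' hs' (erase_ssubset hx₀) fun y hy => hcs y (mem_of_mem_erase hy)
    have hkey := div_add_log_le_log_add (hQ x₀ hx₀).le (sum_pos hQ' hs')
    rw [← add_sum_erase s _ hx₀, tailMass_eq_sum_of_forall_le hmin, ← add_sum_erase s _ hx₀]
    linarith [sum_le_sum hterm]

end TailMass

theorem normal_prior_uniform_metric_bound_general
    {X : Type*} [Fintype X]
    (Q : X → ℝ) (hQ0 : ∀ x, 0 ≤ Q x) (hQ1 : ∑ x, Q x = 1)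
    (hs : (univ.filter fun x => Q x ≠ 0).Nonempty)
    (χ : ℝ) (hχ : χ = -Real.logb 2 ((univ.filter fun x => Q x ≠ 0).inf' hs Q)) :
    ∀ m : X → ℝ,
      ∑ x, Q x * (1 / ∑ x' ∈ univ.filter (fun x' => m x ≤ m x'), Q x')
        ≤ 1 + Real.log 2 * χ := by
  intro m
  obtain ⟨x₀, hx₀, hx₀_min⟩ := exists_mem_eq_inf' hs Q
  have hQx₀ : 0 < Q x₀ := (hQ0 x₀).lt_of_ne' (mem_filter.mp hx₀).2
  have hχ_log : Real.log 2 * χ = -Real.log (Q x₀) := by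
    rw [hχ, hx₀_min, Real.logb]
    field_simp
  have hbound := sum_div_tailMass_le (m := m) hQx₀ hs fun x hx => hx₀_min ▸ inf'_le Q hx
  rw [sum_filter_ne_zero, hQ1, Real.log_one, sum_div_tailMass_filter_ne_zero] at hbound
  calc _ = ∑ x, Q x / tailMass Q m univ x := by simp_rw [mul_one_div]; rfl
    _ ≤ 1 + Real.log 2 * χ := by linarith

/-- Normal prior implies a uniform metric bound: for any metric `m`,
`E_Q[1/p_m(X)] ≤ 1 + ln(2)·χ` where `p_m(x) = Q{x' : m(x') ≥ m(x)}` and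
`χ = -log₂(min of Q on its support)`. -/
theorem normal_prior_uniform_metric_bound
    {X : Type*} [Fintype X] [Nonempty X]
    (Q : X → ℝ) (hQ0 : ∀ x, 0 ≤ Q x) (hQ1 : ∑ x, Q x = 1)
    (hs : (univ.filter fun x => Q x ≠ 0).Nonempty)
    (χ : ℝ) (hχ : χ = -Real.logb 2 ((univ.filter fun x => Q x ≠ 0).inf' hs Q)) :
    ∀ m : X → ℝ,
      ∑ x, Q x * (1 / ∑ x' ∈ univ.filter (fun x' => m x ≤ m x'), Q x')
        ≤ 1 + Real.log 2 * χ :=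
  normal_prior_uniform_metric_bound_general Q hQ0 hQ1 hs χ hχ
end

section
/- Generalized minimum-error test optimality (full statement): Let Q be a probability distribution on finite X, {m_θ}_{θ∈Θ} a finite family of metrics X × Y → ℝ, p_θ(x,y) = Q{x' : m_θ(x',y) ≥ m_θ(x,y)}, u(x,y) = min_θ p_θ(x,y), and K = max_{y∈Y} Σ_{x: Q(x)>0} Q(x)/u(x,y). Suppose further that Q is normal with constant C, meaning E_{X∼Q}[1/p(X)] ≤ C for every function of the form p(x) = Q{m(·) ≥ m(x)}. Then K ≤ |Θ|·C, and for every θ, x, y: Q{x' : u(x',y) ≤ u(x,y)} ≤ |Θ|·C·p_θ(x,y). -/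
/-!
For each metric `θ`, normality applied to `m θ · y` gives `∑ₓ Q x / p θ x y ≤ C`; since `u` is
the minimum of the `p θ`, each `Q x / u x y` is at most `∑_θ Q x / p θ x y`, whence `K ≤ |Θ|·C`.
The pairwise error bound is Markov's inequality for `1 / u(·, y)` under `Q`:
`Q{u ≤ u x y} ≤ u x y · E_Q[1 / u(·, y)] ≤ u x y · K`, and `u ≤ p θ`.
-/

open Finset

lemma div_inf'_le_sum_div {Θ : Type*} {s : Finset Θ} (hs : s.Nonempty) {a : ℝ} (ha : 0 ≤ a)
    {f : Θ → ℝ} (hf : ∀ θ, 0 ≤ f θ) : a / s.inf' hs f ≤ ∑ θ ∈ s, a / f θ := by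
  obtain ⟨θ₀, hθ₀, hmin⟩ := s.exists_mem_eq_inf' hs f
  rw [hmin]
  exact single_le_sum (fun θ _ => div_nonneg ha (hf θ)) hθ₀

lemma sum_div_inf'_le_card_mul {ι Θ : Type*} [Fintype Θ] [Nonempty Θ] (s : Finset ι)
    {Q : ι → ℝ} (hQ : ∀ x, 0 ≤ Q x) {p : Θ → ι → ℝ} (hp : ∀ θ x, 0 ≤ p θ x) {C : ℝ}
    (hC : ∀ θ, ∑ x ∈ s, Q x / p θ x ≤ C) :
    ∑ x ∈ s, Q x / univ.inf' univ_nonempty (p · x) ≤ Fintype.card Θ * C :=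
  calc ∑ x ∈ s, Q x / univ.inf' univ_nonempty (p · x)
      ≤ ∑ x ∈ s, ∑ θ, Q x / p θ x :=
        sum_le_sum fun x _ => div_inf'_le_sum_div _ (hQ x) (hp · x)
    _ = ∑ θ, ∑ x ∈ s, Q x / p θ x := sum_comm
    _ ≤ ∑ _θ : Θ, C := sum_le_sum fun θ _ => hC θ
    _ = Fintype.card Θ * C := by rw [sum_const, card_univ, nsmul_eq_mul]

lemma sum_filter_le_le_mul_sum_div {ι : Type*} (s : Finset ι) {Q u : ι → ℝ}
    (hQ : ∀ x, 0 ≤ Q x) (hu : ∀ x, 0 < Q x → 0 < u x) {t : ℝ} (ht : 0 ≤ t) :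
    ∑ x ∈ s with u x ≤ t, Q x ≤ t * ∑ x ∈ s with 0 < Q x, Q x / u x := by
  rw [sum_filter, sum_filter, mul_sum]
  refine sum_le_sum fun x _ => ?_
  split_ifs with hut hQx hQx
  · calc Q x = u x * (Q x / u x) := by field_simp [(hu x hQx).ne']
      _ ≤ t * (Q x / u x) :=
        mul_le_mul_of_nonneg_right hut (div_nonneg hQx.le (hu x hQx).le)
  · simp [le_antisymm (not_lt.mp hQx) (hQ x)]
  · exact mul_nonneg ht (div_nonneg hQx.le (hu x hQx).le)
  · simp

theorem gmet_optimality_general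
    {X Y Θ : Type*} [Fintype X] [Fintype Y] [Fintype Θ]
    [Nonempty Y] [Nonempty Θ]
    (Q : X → ℝ) (hQ0 : ∀ x, 0 ≤ Q x)
    (m : Θ → X → Y → ℝ)
    (p : Θ → X → Y → ℝ)
    (hp : ∀ θ x y, p θ x y = ∑ x' ∈ univ.filter (fun x' => m θ x y ≤ m θ x' y), Q x')
    (u : X → Y → ℝ) (hu : ∀ x y, u x y = univ.inf' univ_nonempty (fun θ => p θ x y))
    (K : ℝ)
    (hK : K = univ.sup' univ_nonempty
      (fun y => ∑ x ∈ univ.filter (fun x => 0 < Q x), Q x / u x y))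
    (C : ℝ)
    (hC : ∀ mm : X → ℝ,
      ∑ x, Q x * (1 / ∑ x' ∈ univ.filter (fun x' => mm x ≤ mm x'), Q x') ≤ C) :
    K ≤ (Fintype.card Θ : ℝ) * C ∧
    ∀ θ x y, ∑ x' ∈ univ.filter (fun x' => u x' y ≤ u x y), Q x'
      ≤ (Fintype.card Θ : ℝ) * C * p θ x y := by
  have hQp : ∀ θ x y, Q x ≤ p θ x y := fun θ x y => by
    rw [hp]; exact single_le_sum (fun x' _ => hQ0 x') (by simp)
  have hp0 : ∀ θ x y, 0 ≤ p θ x y := fun θ x y => (hQ0 x).trans (hQp θ x y)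
  have hQu : ∀ x y, Q x ≤ u x y := fun x y => by
    rw [hu]; exact le_inf' _ _ fun θ _ => hQp θ x y
  have hu0 : ∀ x y, 0 ≤ u x y := fun x y => (hQ0 x).trans (hQu x y)
  have hup : ∀ θ x y, u x y ≤ p θ x y := fun θ x y => by
    rw [hu]; exact inf'_le _ (mem_univ θ)
  have hnormal : ∀ θ y, ∑ x, Q x / p θ x y ≤ C := fun θ y => by
    simpa only [hp, div_eq_mul_inv, one_mul] using hC (m θ · y)
  have hKy_le : ∀ y, ∑ x ∈ univ.filter (fun x => 0 < Q x), Q x / u x y ≤ K := fun y =>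
    hK ▸ le_sup' (fun y => ∑ x ∈ univ.filter (fun x => 0 < Q x), Q x / u x y) (mem_univ y)
  have hK0 : 0 ≤ K := (sum_nonneg fun x _ => div_nonneg (hQ0 x) (hu0 x _)).trans
    (hKy_le (Classical.arbitrary Y))
  have hKle : K ≤ Fintype.card Θ * C := hK ▸ sup'_le _ _ fun y _ => calc
    _ ≤ ∑ x, Q x / u x y :=
        sum_le_sum_of_subset_of_nonneg (filter_subset _ _) fun x _ _ =>
          div_nonneg (hQ0 x) (hu0 x y)
    _ ≤ Fintype.card Θ * C := by
        simpa only [hu] using sum_div_inf'_le_card_mul univ hQ0 (hp0 · · y) (hnormal · y)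
  refine ⟨hKle, fun θ x y => ?_⟩
  calc ∑ x' ∈ univ.filter (fun x' => u x' y ≤ u x y), Q x'
      ≤ u x y * ∑ x' ∈ univ.filter (fun x' => 0 < Q x'), Q x' / u x' y :=
        sum_filter_le_le_mul_sum_div univ hQ0 (fun x' hx' => hx'.trans_le (hQu x' y)) (hu0 x y)
    _ ≤ u x y * K := mul_le_mul_of_nonneg_left (hKy_le y) (hu0 x y)
    _ ≤ p θ x y * (Fintype.card Θ * C) := mul_le_mul (hup θ x y) hKle hK0 (hp0 θ x y)
    _ = Fintype.card Θ * C * p θ x y := mul_comm _ _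

/-- Generalized minimum-error test optimality: if `Q` is normal with constant
`C`, then the GMET redundancy satisfies `K ≤ |Θ|·C` and the GMET pairwise
error is within a factor `|Θ|·C` of every metric's pairwise error. -/
theorem gmet_optimality
    {X Y Θ : Type*} [Fintype X] [Fintype Y] [Fintype Θ]
    [Nonempty X] [Nonempty Y] [Nonempty Θ]
    (Q : X → ℝ) (hQ0 : ∀ x, 0 ≤ Q x) (hQ1 : ∑ x, Q x = 1)
    (m : Θ → X → Y → ℝ)
    (p : Θ → X → Y → ℝ)
    (hp : ∀ θ x y, p θ x y = ∑ x' ∈ univ.filter (fun x' => m θ x y ≤ m θ x' y), Q x')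
    (u : X → Y → ℝ) (hu : ∀ x y, u x y = univ.inf' univ_nonempty (fun θ => p θ x y))
    (K : ℝ)
    (hK : K = univ.sup' univ_nonempty
      (fun y => ∑ x ∈ univ.filter (fun x => 0 < Q x), Q x / u x y))
    (C : ℝ) (hC0 : 0 ≤ C)
    (hC : ∀ mm : X → ℝ,
      ∑ x, Q x * (1 / ∑ x' ∈ univ.filter (fun x' => mm x ≤ mm x'), Q x') ≤ C) :
    K ≤ (Fintype.card Θ : ℝ) * C ∧
    ∀ θ x y, ∑ x' ∈ univ.filter (fun x' => u x' y ≤ u x y), Q x'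
      ≤ (Fintype.card Θ : ℝ) * C * p θ x y :=
  gmet_optimality_general Q hQ0 m p hp u hu K hK C hC
end
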